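/- The Toeplitz matrix T_n(x) has symmetrized cycle-sums: for every 2 ≤ k ≤ n and every subset S ⊆ {1,...,n} with |S| = k, the cycle-sum C_S(T_n(x)) equals x^{−k}·Σ_{w ∈ S_{k−1}} (−x²)^{des(w)+1}, where des(w) is the number of descents of the permutation w. In particular C_S depends only on |S|. -/

import Mathlib

/-!
Away from the diagonal, `T_n(x)` is the diagonal conjugate `D⁻¹ M D`, `D = diag(x^i)`, of the
matrix `M` with entries `x⁻¹` above and `-x` below the diagonal. Around a cycle the factors of
`D` cancel, so the cyclic product of `T_n(x)` over a cycle `σ` on `S` is `x^{-k}(-x²)^d`,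
where `d` is the number of drops `σ i < i`. A cycle on `S` is its cyclic order read from
`min S`, i.e. `min S` followed by a word `w ∈ S_{k-1}` of the remaining positions; the drops
of the cycle are the descents of `w` together with the final return to `min S`.
-/

open scoped Classical

/-- The cycle-sum `C_S(A)`: sum over all cyclic orderings of `S` of the
corresponding cyclic products of entries of `A`. -/
noncomputable def cycleSum {n : ℕ} (A : Matrix (Fin n) (Fin n) ℂ) (S : Finset (Fin n)) : ℂ :=
  ∑ σ ∈ Finset.univ.filter
      (fun σ : Equiv.Perm (Fin n) =>
        σ.IsCycleOn (S : Set (Fin n)) ∧ ∀ i ∉ S, σ i = i),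
    ∏ i ∈ S, A i (σ i)

/-- The principal minor of `A` with row and column set `S`. -/
noncomputable def pminor {n : ℕ} (A : Matrix (Fin n) (Fin n) ℂ) (S : Finset (Fin n)) : ℂ :=
  (A.submatrix (fun i : S => (i : Fin n)) (fun i : S => (i : Fin n))).det

/-- The Toeplitz matrix `T_n(x)` with `(i,j)` entry `sgn(j-i)·x^(j-i-sgn(j-i))`,
i.e. `x^(j-i-1)` above the diagonal, `-(x⁻¹)^(i-j-1)` below, `0` on the diagonal. -/
noncomputable def toeplitzT (n : ℕ) (x : ℂ) : Matrix (Fin n) (Fin n) ℂ :=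
  Matrix.of fun i j =>
    if (i : ℕ) < (j : ℕ) then x ^ ((j : ℕ) - (i : ℕ) - 1)
    else if (j : ℕ) < (i : ℕ) then -(x⁻¹) ^ ((i : ℕ) - (j : ℕ) - 1)
    else 0

/-- The number of descents of a permutation `w` of `Fin m`, viewed as the word
`w(0) w(1) ⋯ w(m-1)`. -/
noncomputable def descents {m : ℕ} (w : Equiv.Perm (Fin m)) : ℕ :=
  (Finset.univ.filter (fun i : Fin m =>
    ∃ h : (i : ℕ) + 1 < m, w ⟨(i : ℕ) + 1, h⟩ < w i)).card

open Finset Equiv Equiv.Perm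

section PermFin

variable {k : ℕ}

lemma descents_eq_card_succ_lt_castSucc (w : Perm (Fin (k + 1))) :
    descents w = #{i : Fin k | w i.succ < w i.castSucc} := by
  simp only [descents, card_filter, Fin.sum_univ_castSucc, Fin.val_castSucc, Fin.val_last,
    lt_irrefl, IsEmpty.exists_iff, if_false, add_zero]
  exact sum_congr rfl fun i _ =>
    if_congr ⟨fun ⟨_, h⟩ => h, fun h => ⟨by omega, h⟩⟩ rfl rfl

lemma decomposeFin_symm_zero_apply_succ (w : Perm (Fin (k + 1))) (i : Fin (k + 1)) :
    decomposeFin.symm (0, w) i.succ = (w i).succ := by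
  rw [decomposeFin_symm_apply_succ, swap_self, refl_apply]

lemma exists_decomposeFin_symm_zero_eq {p : Perm (Fin (k + 2))} (hp : p 0 = 0) :
    ∃ w : Perm (Fin (k + 1)), decomposeFin.symm (0, w) = p := by
  obtain ⟨⟨a, w⟩, rfl⟩ := decomposeFin.symm.surjective p
  obtain rfl : a = 0 := by rwa [decomposeFin_symm_apply_zero] at hp
  exact ⟨w, rfl⟩

-- The extra descent is the return from the last letter to `0`.
lemma card_cyclicDescents_decomposeFin (w : Perm (Fin (k + 1))) :
    #{i : Fin (k + 2) | decomposeFin.symm (0, w) (i + 1) < decomposeFin.symm (0, w) i} =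
      descents w + 1 := by
  simp only [descents_eq_card_succ_lt_castSucc, card_filter, Fin.sum_univ_castSucc (n := k + 1),
    Fin.sum_univ_succ (n := k), Fin.coeSucc_eq_succ, Fin.castSucc_zero,
    decomposeFin_symm_apply_zero, decomposeFin_symm_zero_apply_succ, Fin.not_lt_zero,
    ← Fin.succ_castSucc, Fin.succ_lt_succ_iff, Fin.last_add_one, if_false, zero_add]
  rw [← Fin.succ_last, decomposeFin_symm_zero_apply_succ, if_pos (Fin.succ_pos _)]

end PermFin

section CycleOfWord

variable {α : Type*} [LinearOrder α]

def numDrops (σ : Perm α) (S : Finset α) : ℕ := #{i ∈ S | σ i < i}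

noncomputable def cyclesOn [Fintype α] (S : Finset α) : Finset (Perm α) :=
  {σ | σ.IsCycleOn (S : Set α) ∧ ∀ i ∉ S, σ i = i}

lemma mem_cyclesOn [Fintype α] {S : Finset α} {σ : Perm α} :
    σ ∈ cyclesOn S ↔ σ.IsCycleOn (S : Set α) ∧ ∀ i ∉ S, σ i = i := by
  rw [cyclesOn, mem_filter, and_iff_right (mem_univ σ)]

lemma support_eq_of_mem_cyclesOn [Fintype α] {S : Finset α} {σ : Perm α}
    (hσ : σ ∈ cyclesOn S) (hS : S.Nontrivial) : σ.support = S := by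
  obtain ⟨hcyc, hfix⟩ := mem_cyclesOn.1 hσ
  ext b
  exact mem_support.trans ⟨fun hb => by_contra fun h => hb (hfix b h), hcyc.apply_ne hS⟩

lemma isCycle_of_mem_cyclesOn [Fintype α] {S : Finset α} {σ : Perm α}
    (hσ : σ ∈ cyclesOn S) (hS : S.Nontrivial) : σ.IsCycle := by
  obtain ⟨hcyc, hfix⟩ := mem_cyclesOn.1 hσ
  exact isCycle_iff_exists_isCycleOn.2
    ⟨S, hS, hcyc, fun b hb => by_contra fun h => hb (hfix b h)⟩

variable (S : Finset α) {k : ℕ} (hk : #S = k + 2)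

/-- The cyclic order `e 0, e (w 0 + 1), …, e (w k + 1)` of `S`, where `e` enumerates `S`
increasingly. -/
def cycleWord (w : Perm (Fin (k + 1))) : List α :=
  List.ofFn fun i => S.orderEmbOfFin hk (decomposeFin.symm (0, w) i)

def cycleOfWord (w : Perm (Fin (k + 1))) : Perm α :=
  (cycleWord S hk w).formPerm

variable {S hk}

lemma length_cycleWord (w : Perm (Fin (k + 1))) : (cycleWord S hk w).length = k + 2 :=
  List.length_ofFn

lemma nodup_cycleWord (w : Perm (Fin (k + 1))) : (cycleWord S hk w).Nodup :=
  List.nodup_ofFn.2 ((S.orderEmbOfFin hk).injective.comp (decomposeFin.symm (0, w)).injective)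

lemma mem_cycleWord (w : Perm (Fin (k + 1))) {a : α} : a ∈ cycleWord S hk w ↔ a ∈ S := by
  rw [cycleWord, List.mem_ofFn, ← mem_coe, ← range_orderEmbOfFin S hk]
  exact ⟨fun ⟨i, hi⟩ => ⟨_, hi⟩,
    fun ⟨j, hj⟩ => ⟨(decomposeFin.symm (0, w)).symm j, by simpa⟩⟩

lemma cycleOfWord_apply (w : Perm (Fin (k + 1))) (i : Fin (k + 2)) :
    cycleOfWord S hk w (S.orderEmbOfFin hk (decomposeFin.symm (0, w) i)) =
      S.orderEmbOfFin hk (decomposeFin.symm (0, w) (i + 1)) := by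
  have h := List.formPerm_apply_getElem _ (nodup_cycleWord (S := S) (hk := hk) w) i
    (by rw [length_cycleWord]; exact i.isLt)
  simp only [cycleWord, List.getElem_ofFn, List.length_ofFn] at h
  rw [cycleOfWord, cycleWord, h]
  congr 3

lemma cycleOfWord_mem_cyclesOn [Fintype α] (w : Perm (Fin (k + 1))) :
    cycleOfWord S hk w ∈ cyclesOn S := by
  refine mem_cyclesOn.2 ⟨?_, fun i hi => ?_⟩
  · have hset : {a | a ∈ cycleWord S hk w} = (S : Set α) := Set.ext fun a => mem_cycleWord w
    exact hset ▸ (nodup_cycleWord w).isCycleOn_formPerm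
  · exact List.formPerm_apply_of_notMem ((mem_cycleWord w).not.2 hi)

lemma toList_cycleOfWord [Fintype α] (w : Perm (Fin (k + 1))) :
    (cycleOfWord S hk w).toList (S.orderEmbOfFin hk 0) = cycleWord S hk w := by
  have h0 : (cycleWord S hk w).get ⟨0, by simp [length_cycleWord]⟩ = S.orderEmbOfFin hk 0 := by
    simp [cycleWord]
  rw [cycleOfWord, ← h0]
  exact toList_formPerm_nontrivial _ (by simp [length_cycleWord]) (nodup_cycleWord w)

lemma cycleOfWord_injective [Fintype α] : Function.Injective (cycleOfWord S hk) := by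
  intro w w' h
  have hl := toList_cycleOfWord (S := S) (hk := hk) w
  rw [h, toList_cycleOfWord, cycleWord, cycleWord] at hl
  have hp : decomposeFin.symm (0, w) = decomposeFin.symm (0, w') :=
    Equiv.ext fun i => (S.orderEmbOfFin hk).injective (congrFun (List.ofFn_injective hl) i).symm
  simpa using decomposeFin.symm.injective hp

lemma exists_cycleWord_eq {L : List α} (hL : L.Nodup) (hlen : L.length = k + 2)
    (hmem : ∀ b ∈ L, b ∈ S) (h0 : L[0]'(by omega) = S.orderEmbOfFin hk 0) :
    ∃ w, cycleWord S hk w = L := by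
  let q (i : Fin (k + 2)) : Fin (k + 2) :=
    (S.orderIsoOfFin hk).symm ⟨L[(i : ℕ)]'(by omega), hmem _ (List.getElem_mem _)⟩
  have hq (i : Fin (k + 2)) : S.orderEmbOfFin hk (q i) = L[(i : ℕ)]'(by omega) := by
    simp [q, ← coe_orderIsoOfFin_apply]
  have hq_inj : Function.Injective q := fun i j hij =>
    Fin.ext ((hL.getElem_inj_iff).1 (by rw [← hq, ← hq, hij]))
  obtain ⟨w, hw⟩ := exists_decomposeFin_symm_zero_eq
    (p := ofBijective q (Finite.injective_iff_bijective.1 hq_inj))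
    ((S.orderEmbOfFin hk).injective (by simp [hq, h0]))
  refine ⟨w, List.ext_getElem (by rw [length_cycleWord, hlen]) fun i h1 h2 => ?_⟩
  simp only [cycleWord, List.getElem_ofFn, hw, ofBijective_apply, hq]

lemma exists_cycleOfWord_eq [Fintype α] {σ : Perm α} (hσ : σ ∈ cyclesOn S) :
    ∃ w, cycleOfWord S hk w = σ := by
  have hS : S.Nontrivial := one_lt_card_iff_nontrivial.1 (by rw [hk]; omega)
  have hsupp := support_eq_of_mem_cyclesOn hσ hS
  have ha : S.orderEmbOfFin hk 0 ∈ σ.support := hsupp ▸ orderEmbOfFin_mem S hk 0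
  have hσ_cycleOf := (isCycle_of_mem_cyclesOn hσ hS).cycleOf_eq (mem_support.1 ha)
  obtain ⟨w, hw⟩ := exists_cycleWord_eq (hk := hk) (nodup_toList σ _)
    (by rw [Perm.length_toList, hσ_cycleOf, hsupp, hk])
    (fun b hb => hsupp ▸ (mem_toList_iff.1 hb).1.mem_support_iff.1 ha)
    (toList_getElem_zero _ _ ha)
  exact ⟨w, by rw [cycleOfWord, hw, formPerm_toList, hσ_cycleOf]⟩

lemma numDrops_cycleOfWord (w : Perm (Fin (k + 1))) :
    numDrops (cycleOfWord S hk w) S = descents w + 1 := by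
  let f (i : Fin (k + 2)) : α := S.orderEmbOfFin hk (decomposeFin.symm (0, w) i)
  have hf : Function.Injective f :=
    (S.orderEmbOfFin hk).injective.comp (decomposeFin.symm (0, w)).injective
  have hS : univ.image f = S := by
    ext a
    rw [← mem_cycleWord (hk := hk) w, cycleWord, List.mem_ofFn, mem_image]
    simp [f]
  calc numDrops (cycleOfWord S hk w) S
      = #{a ∈ univ.image f | cycleOfWord S hk w a < a} := by rw [hS, numDrops]
    _ = #{i | cycleOfWord S hk w (f i) < f i} := by
      rw [filter_image, card_image_of_injective _ hf]
    _ = descents w + 1 := by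
      simp only [f, cycleOfWord_apply, OrderEmbedding.lt_iff_lt, card_cyclicDescents_decomposeFin]

end CycleOfWord

lemma sum_cyclesOn_eq_sum_perm {α M : Type*} [LinearOrder α] [Fintype α] [AddCommMonoid M]
    (S : Finset α) {k : ℕ} (hk : #S = k + 2) (f : ℕ → M) :
    ∑ σ ∈ cyclesOn S, f (numDrops σ S) = ∑ w : Perm (Fin (k + 1)), f (descents w + 1) := by
  symm
  refine sum_nbij (cycleOfWord S hk) (fun w _ => cycleOfWord_mem_cyclesOn w)
    cycleOfWord_injective.injOn (fun σ hσ => ?_) (fun w _ => by rw [numDrops_cycleOfWord])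
  obtain ⟨w, hw⟩ := exists_cycleOfWord_eq (hk := hk) hσ
  exact ⟨w, mem_coe.2 (mem_univ w), hw⟩

-- The two filters differ only in their decidability instances.
lemma cycleSum_eq_sum_cyclesOn {n : ℕ} (A : Matrix (Fin n) (Fin n) ℂ) (S : Finset (Fin n)) :
    cycleSum A S = ∑ σ ∈ cyclesOn S, ∏ i ∈ S, A i (σ i) := by
  unfold cycleSum cyclesOn
  congr

lemma toeplitzT_apply_of_ne {n : ℕ} {x : ℂ} (hx : x ≠ 0) {i j : Fin n} (hij : i ≠ j) :
    toeplitzT n x i j =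
      (if j < i then -x ^ 2 else 1) * x⁻¹ * (x ^ (j : ℕ) / x ^ (i : ℕ)) := by
  rcases hij.lt_or_gt with hlt | hlt
  · obtain ⟨d, hd⟩ := Nat.exists_eq_add_of_lt (Fin.lt_def.1 hlt)
    simp only [toeplitzT, Matrix.of_apply, if_pos (Fin.lt_def.1 hlt), if_neg hlt.asymm,
      show (j : ℕ) - i - 1 = d by omega]
    rw [hd]
    field_simp
    ring
  · obtain ⟨d, hd⟩ := Nat.exists_eq_add_of_lt (Fin.lt_def.1 hlt)
    simp only [toeplitzT, Matrix.of_apply, if_neg (Fin.lt_def.not.1 hlt.asymm),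
      if_pos (Fin.lt_def.1 hlt), if_pos hlt, show (i : ℕ) - j - 1 = d by omega, inv_pow]
    rw [hd]
    field_simp
    ring

lemma prod_toeplitzT_apply {n : ℕ} {x : ℂ} (hx : x ≠ 0) (S : Finset (Fin n))
    (σ : Perm (Fin n)) (hσ : ∀ i ∈ S, σ i ≠ i) (hfix : ∀ i ∉ S, σ i = i) :
    ∏ i ∈ S, toeplitzT n x i (σ i) = x⁻¹ ^ #S * (-x ^ 2) ^ numDrops σ S := by
  have hsupp : {i | σ i ≠ i} ⊆ S := fun i hi => by_contra fun h => hi (hfix i h)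
  rw [prod_congr rfl fun i hi => toeplitzT_apply_of_ne hx (hσ i hi).symm,
    prod_mul_distrib, prod_mul_distrib, prod_div_distrib,
    σ.prod_comp S (fun i => x ^ (i : ℕ)) hsupp,
    div_self (prod_ne_zero_iff.2 fun i _ => pow_ne_zero _ hx), prod_ite, prod_const,
    prod_const_one, prod_const, numDrops]
  ring

/-- The Toeplitz matrix `T_n(x)` has symmetrized cycle-sums given by signed,
rescaled Eulerian polynomials:
`C_S(T_n(x)) = x^{-k} Σ_{w ∈ S_{k-1}} (-x²)^(des(w)+1)` for `|S| = k ≥ 2`. -/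
theorem stmt15 (n : ℕ) (x : ℂ) (hx : x ≠ 0) (S : Finset (Fin n)) (hS : 2 ≤ S.card) :
    cycleSum (toeplitzT n x) S =
      (x⁻¹) ^ S.card *
        ∑ w : Equiv.Perm (Fin (S.card - 1)), (-(x ^ 2)) ^ (descents w + 1) := by
  obtain ⟨k, hk⟩ : ∃ k, #S = k + 2 := ⟨#S - 2, by omega⟩
  have hS_nontrivial : S.Nontrivial := one_lt_card_iff_nontrivial.1 (by omega)
  calc cycleSum (toeplitzT n x) S
      = ∑ σ ∈ cyclesOn S, x⁻¹ ^ #S * (-x ^ 2) ^ numDrops σ S := by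
        refine (cycleSum_eq_sum_cyclesOn _ S).trans (sum_congr rfl fun σ hσ => ?_)
        obtain ⟨hcyc, hfix⟩ := mem_cyclesOn.1 hσ
        exact prod_toeplitzT_apply hx S σ (fun i hi => hcyc.apply_ne hS_nontrivial hi) hfix
    _ = x⁻¹ ^ #S * ∑ w : Perm (Fin (k + 1)), (-x ^ 2) ^ (descents w + 1) := by
        rw [← mul_sum, sum_cyclesOn_eq_sum_perm S hk]
    _ = _ := by rw [hk]; rfl
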